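/- arXiv:2012.14037 — 2 statements merged into one kernel-verified Lean document; each statement's English description precedes it below -/
import Mathlib

section
/- Let L_+, L_− be the linearized operators around the ground state Q in dimension d ∈ {1,2}, and suppose (Lf, f) := ⟨L_+ f₁, f₁⟩ + ⟨L_− f₂, f₂⟩ ≥ C‖f‖_{H¹}² for all f = f₁ + i f₂ in the set K of H¹ functions orthogonal to Q, xQ, |x|²Q in the first component and to ∇Q, ΛQ, ρ in the second component. Then there exist constants C₁, C₂ > 0 such that for every f = f₁ + i f₂ ∈ H¹(ℝ^d), (Lf, f) ≥ C₁‖f‖_{H¹}² − C₂ Scal(f), where Scal(f) = ⟨f₁,Q⟩² + ⟨f₁,xQ⟩² + ⟨f₁,|x|²Q⟩² + ⟨f₂,∇Q⟩² + ⟨f₂,ΛQ⟩² + ⟨f₂,ρ⟩². -/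
set_option maxHeartbeats 800000


open MeasureTheory

noncomputable section

variable {d : ℕ}

/-- The Laplacian of `f : ℝ^d → ℝ`, as the sum of second partial derivatives. -/
def lapR (f : EuclideanSpace ℝ (Fin d) → ℝ) (x : EuclideanSpace ℝ (Fin d)) : ℝ :=
  ∑ i : Fin d, fderiv ℝ (fun y => fderiv ℝ f y (EuclideanSpace.single i 1)) x
    (EuclideanSpace.single i 1)

/-- The scaling generator `Λ = (d/2) I + x·∇`. -/
def lamOp (f : EuclideanSpace ℝ (Fin d) → ℝ) (x : EuclideanSpace ℝ (Fin d)) : ℝ :=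
  ((d : ℝ) / 2) * f x + fderiv ℝ f x x

/-- The linearized operator `L₊ = −Δ + I − (1 + 4/d) Q^{4/d}`. -/
def Lplus (Q f : EuclideanSpace ℝ (Fin d) → ℝ) (x : EuclideanSpace ℝ (Fin d)) : ℝ :=
  - lapR f x + f x - (1 + 4 / (d : ℝ)) * Q x ^ ((4 : ℝ) / d) * f x

/-- Membership in `H¹(ℝ^d, ℝ)`. -/
def MemH1R (f : EuclideanSpace ℝ (Fin d) → ℝ) : Prop :=
  Differentiable ℝ f ∧ MemLp f 2 volume ∧ MemLp (fun x => fderiv ℝ f x) 2 volume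

/-- The squared `H¹` norm of a real function: `∫ |∇f|² + |f|²`. -/
def H1SqR (f : EuclideanSpace ℝ (Fin d) → ℝ) : ℝ :=
  ∫ x : EuclideanSpace ℝ (Fin d), (‖fderiv ℝ f x‖ ^ 2 + f x ^ 2)

/-- The quadratic form `(Lf, f) = ⟨L₊f₁, f₁⟩ + ⟨L₋f₂, f₂⟩` of the linearized operator,
written in the integrated-by-parts form valid for `H¹` functions. -/
def Lquad (Q f₁ f₂ : EuclideanSpace ℝ (Fin d) → ℝ) : ℝ :=
  ∫ x : EuclideanSpace ℝ (Fin d),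
    (‖fderiv ℝ f₁ x‖ ^ 2 + f₁ x ^ 2 - (1 + 4 / (d : ℝ)) * Q x ^ ((4 : ℝ) / d) * f₁ x ^ 2
      + ‖fderiv ℝ f₂ x‖ ^ 2 + f₂ x ^ 2 - Q x ^ ((4 : ℝ) / d) * f₂ x ^ 2)

/-- The scalar products along the six unstable directions:
`Scal(f) = ⟨f₁,Q⟩² + ⟨f₁,xQ⟩² + ⟨f₁,|x|²Q⟩² + ⟨f₂,∇Q⟩² + ⟨f₂,ΛQ⟩² + ⟨f₂,ρ⟩²`. -/
def ScalQ (Q ρ f₁ f₂ : EuclideanSpace ℝ (Fin d) → ℝ) : ℝ :=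
  (∫ x, f₁ x * Q x) ^ 2
  + (∑ i : Fin d, (∫ x : EuclideanSpace ℝ (Fin d), f₁ x * (x i * Q x)) ^ 2)
  + (∫ x : EuclideanSpace ℝ (Fin d), f₁ x * (‖x‖ ^ 2 * Q x)) ^ 2
  + (∑ i : Fin d, (∫ x : EuclideanSpace ℝ (Fin d),
      f₂ x * fderiv ℝ Q x (EuclideanSpace.single i 1)) ^ 2)
  + (∫ x : EuclideanSpace ℝ (Fin d), f₂ x * lamOp Q x) ^ 2
  + (∫ x : EuclideanSpace ℝ (Fin d), f₂ x * ρ x) ^ 2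

/-- Membership in the orthogonality class `K`: `f₁ ⊥ Q, xQ, |x|²Q` and
`f₂ ⊥ ∇Q, ΛQ, ρ`. -/
def MemK (Q ρ f₁ f₂ : EuclideanSpace ℝ (Fin d) → ℝ) : Prop :=
  (∫ x, f₁ x * Q x) = 0
  ∧ (∀ i : Fin d, (∫ x : EuclideanSpace ℝ (Fin d), f₁ x * (x i * Q x)) = 0)
  ∧ (∫ x : EuclideanSpace ℝ (Fin d), f₁ x * (‖x‖ ^ 2 * Q x)) = 0
  ∧ (∀ i : Fin d, (∫ x : EuclideanSpace ℝ (Fin d),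
      f₂ x * fderiv ℝ Q x (EuclideanSpace.single i 1)) = 0)
  ∧ (∫ x : EuclideanSpace ℝ (Fin d), f₂ x * lamOp Q x) = 0
  ∧ (∫ x : EuclideanSpace ℝ (Fin d), f₂ x * ρ x) = 0

/-! ### Auxiliary lemmas -/

section AuxLemmas

open Real

local notation "EE" => EuclideanSpace ℝ (Fin d)

/-- Cauchy–Schwarz for integrals of nonnegative functions. -/
lemma cws_integral_CS {u v : EE → ℝ} (hu : MemLp u 2 volume) (hv : MemLp v 2 volume)
    (hu0 : ∀ x, 0 ≤ u x) (hv0 : ∀ x, 0 ≤ v x) :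
    ∫ x, u x * v x ≤ Real.sqrt (∫ x, u x ^ 2) * Real.sqrt (∫ x, v x ^ 2) := by
  have hpq : (2:ℝ).HolderConjugate 2 := Real.HolderConjugate.two_two
  have hu' : MemLp u (ENNReal.ofReal (2:ℝ)) volume := by norm_num; exact hu
  have hv' : MemLp v (ENNReal.ofReal (2:ℝ)) volume := by norm_num; exact hv
  have := MeasureTheory.integral_mul_le_Lp_mul_Lq_of_nonneg (μ := volume) hpq
    (ae_of_all _ hu0) (ae_of_all _ hv0) hu' hv'
  calc ∫ x, u x * v x ≤ (∫ a, u a ^ (2:ℝ)) ^ ((1:ℝ)/2) * (∫ a, v a ^ (2:ℝ)) ^ ((1:ℝ)/2) := this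
    _ = Real.sqrt (∫ x, u x ^ 2) * Real.sqrt (∫ x, v x ^ 2) := by
        rw [Real.sqrt_eq_rpow, Real.sqrt_eq_rpow]
        norm_num [Real.rpow_natCast]

lemma cws_one_add_mul_exp_le {a t : ℝ} (ha : 0 < a) (ht : 0 ≤ t) :
    (1 + t) * Real.exp (-(a * t)) ≤ max 1 a⁻¹ := by
  have h1 : 1 + a * t ≤ Real.exp (a * t) := by
    have := Real.add_one_le_exp (a * t); linarith
  have hK : (1:ℝ) ≤ max 1 a⁻¹ := le_max_left _ _
  have hKa : 1 ≤ max 1 a⁻¹ * a := by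
    calc (1:ℝ) = a⁻¹ * a := by field_simp
    _ ≤ max 1 a⁻¹ * a := by gcongr; exact le_max_right _ _
  have h2 : 1 + t ≤ max 1 a⁻¹ * Real.exp (a * t) := by
    calc 1 + t ≤ max 1 a⁻¹ * (1 + a*t) := by nlinarith [mul_nonneg ha.le ht]
    _ ≤ max 1 a⁻¹ * Real.exp (a*t) := by
        have h1' : (1:ℝ) + a*t ≤ Real.exp (a*t) := h1
        gcongr
  have hexp : 0 < Real.exp (-(a*t)) := Real.exp_pos _
  calc (1 + t) * Real.exp (-(a * t)) ≤ (max 1 a⁻¹ * Real.exp (a*t)) * Real.exp (-(a*t)) := by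
        gcongr
    _ = max 1 a⁻¹ := by rw [mul_assoc, ← Real.exp_add]; simp

lemma cws_poly_exp_bound (m : ℕ) {ε : ℝ} (hε : 0 < ε) :
    ∃ M : ℝ, 0 < M ∧ ∀ t : ℝ, 0 ≤ t → (1 + t) ^ m * Real.exp (-(ε * t)) ≤ M := by
  rcases Nat.eq_zero_or_pos m with hm | hm
  · exact ⟨1, one_pos, fun t ht => by
      simpa [hm] using Real.exp_le_one_iff.2 (by nlinarith : -(ε*t) ≤ 0)⟩
  set a : ℝ := ε / m with ha
  have ha0 : 0 < a := div_pos hε (by exact_mod_cast hm)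
  refine ⟨(max 1 a⁻¹) ^ m, pow_pos (lt_of_lt_of_le one_pos (le_max_left _ _)) _, fun t ht => ?_⟩
  have key : (1 + t) * Real.exp (-(a * t)) ≤ max 1 a⁻¹ := cws_one_add_mul_exp_le ha0 ht
  have h1t : (0:ℝ) ≤ (1 + t) * Real.exp (-(a * t)) := by positivity
  have := pow_le_pow_left₀ h1t key m
  have hrw : ((1 + t) * Real.exp (-(a * t))) ^ m = (1 + t) ^ m * Real.exp (-(ε * t)) := by
    rw [mul_pow, ← Real.exp_nat_mul]
    congr 2
    rw [ha]
    have hm' : (m:ℝ) ≠ 0 := by positivity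
    have e : (m:ℝ) * (ε / m) = ε := mul_div_cancel₀ ε hm'
    linear_combination (-t) * e
  rwa [hrw] at this

lemma cws_memℒp_two_of_decay {W : EE → ℝ} (hm : AEStronglyMeasurable W (volume : Measure EE))
    {A δ : ℝ} (hδ : 0 < δ)
    (hbd : ∀ x : EE, |W x| ≤ A * (1 + ‖x‖) ^ 2 * Real.exp (-(δ * ‖x‖))) :
    MemLp W 2 (volume : Measure EE) := by
  rw [memLp_two_iff_integrable_sq hm]
  obtain ⟨M₀, hM₀, hb⟩ := cws_poly_exp_bound (d + 5) (mul_pos two_pos hδ)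
  have hint : Integrable (fun x : EE => (A^2 * M₀) * (1 + ‖x‖) ^ (-((d:ℝ) + 1))) volume := by
    refine Integrable.const_mul ?_ _
    apply integrable_one_add_norm (μ := (volume : Measure EE))
    rw [finrank_euclideanSpace_fin]; linarith
  refine Integrable.mono' hint (hm.mul hm |>.congr (by simp [sq]; rfl)) (ae_of_all _ fun x => ?_)
  set t := ‖x‖ with hts
  have ht : 0 ≤ t := norm_nonneg x
  have h1t : (0:ℝ) < 1 + t := by linarith
  have hW : |W x| ^ 2 ≤ (A * (1 + t) ^ 2 * Real.exp (-(δ * t))) ^ 2 :=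
    pow_le_pow_left₀ (abs_nonneg _) (hbd x) 2
  have hexp2 : Real.exp (-(δ * t)) ^ 2 = Real.exp (-(2 * δ * t)) := by
    rw [← Real.exp_nat_mul]; ring_nf
  have hrpow : (1 + t) ^ (-((d:ℝ) + 1)) = ((1 + t) ^ (d + 1 : ℕ))⁻¹ := by
    rw [Real.rpow_neg h1t.le]
    congr 1
    rw [← Real.rpow_natCast (1 + t) (d+1)]
    push_cast; ring_nf
  have hkey : (1 + t) ^ (d + 5) * Real.exp (-(2 * δ * t)) ≤ M₀ := hb t ht
  have hnorm : ‖W x ^ 2‖ = |W x| ^ 2 := by rw [Real.norm_eq_abs, abs_pow, sq_abs, ← sq_abs]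
  rw [hnorm, hrpow]
  have hfin : |W x| ^ 2 * (1 + t) ^ (d + 1 : ℕ) ≤ A ^ 2 * M₀ := by
    calc |W x| ^ 2 * (1 + t) ^ (d + 1 : ℕ)
        ≤ (A * (1 + t) ^ 2 * Real.exp (-(δ * t))) ^ 2 * (1 + t) ^ (d + 1 : ℕ) := by
          gcongr
      _ = A ^ 2 * ((1 + t) ^ (d + 5) * Real.exp (-(2 * δ * t))) := by
          rw [mul_pow, mul_pow, hexp2]; ring
      _ ≤ A ^ 2 * M₀ := by gcongr
  calc |W x| ^ 2 = (|W x| ^ 2 * (1 + t) ^ (d+1:ℕ)) * ((1 + t) ^ (d+1:ℕ))⁻¹ := by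
        field_simp
    _ ≤ (A ^ 2 * M₀) * ((1 + t) ^ (d+1:ℕ))⁻¹ := by gcongr

/-- H¹ as a submodule of functions. -/
def cwsH1sub (d : ℕ) : Submodule ℝ (EuclideanSpace ℝ (Fin d) → ℝ) where
  carrier := {f | MemH1R f}
  zero_mem' := by
    refine ⟨differentiable_const 0, MemLp.zero, ?_⟩
    have : (fun x : EuclideanSpace ℝ (Fin d) => fderiv ℝ (0 : EuclideanSpace ℝ (Fin d) → ℝ) x)
        = fun _ => (0 : EuclideanSpace ℝ (Fin d) →L[ℝ] ℝ) := by
      funext x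
      rw [show (0 : EuclideanSpace ℝ (Fin d) → ℝ) = (fun _ => (0:ℝ)) from rfl, fderiv_fun_const]
      rfl
    rw [this]
    exact MemLp.zero' (ε := EuclideanSpace ℝ (Fin d) →L[ℝ] ℝ)
  add_mem' := by
    rintro f g ⟨hf1, hf2, hf3⟩ ⟨hg1, hg2, hg3⟩
    refine ⟨hf1.add hg1, hf2.add hg2, ?_⟩
    have : (fun x => fderiv ℝ (f + g) x)
        = fun x => fderiv ℝ f x + fderiv ℝ g x := by
      funext x
      exact fderiv_add (hf1 x) (hg1 x)
    rw [this]; exact MemLp.add (ε := EuclideanSpace ℝ (Fin d) →L[ℝ] ℝ) hf3 hg3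
  smul_mem' := by
    rintro c f ⟨hf1, hf2, hf3⟩
    refine ⟨hf1.const_smul c, hf2.const_smul c, ?_⟩
    have : (fun x => fderiv ℝ (c • f) x) = fun x => c • fderiv ℝ f x := by
      funext x
      exact fderiv_const_smul (hf1 x) c
    rw [this]; exact hf3.const_smul c

lemma cws_integrable_mul_of_memℒp2 {f w : EE → ℝ} (hf : MemLp f 2 volume)
    (hw : MemLp w 2 volume) : Integrable (fun x => f x * w x) volume := by
  refine Integrable.mono' ((hf.integrable_sq.add hw.integrable_sq).const_mul (1/2 : ℝ))
    (hf.1.mul hw.1) (ae_of_all _ fun x => ?_)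
  rw [Real.norm_eq_abs, abs_mul]
  simp only [Pi.add_apply]
  nlinarith [sq_nonneg (|f x| - |w x|), sq_abs (f x), sq_abs (w x), abs_nonneg (f x),
    abs_nonneg (w x)]

lemma cws_H1SqR_nonneg (f : EE → ℝ) : 0 ≤ H1SqR f :=
  integral_nonneg fun x => by positivity

lemma cws_integrable_H1_integrand {f : EE → ℝ} (hf : MemH1R f) :
    Integrable (fun x => ‖fderiv ℝ f x‖ ^ 2 + f x ^ 2) volume :=
  (hf.2.2.norm.integrable_sq).add hf.2.1.integrable_sq

lemma cws_H1SqR_sum_le {k : ℕ} (u : Fin k → (EE → ℝ)) (hu : ∀ i, MemH1R (u i)) (c : Fin k → ℝ) :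
    H1SqR (fun x => ∑ i, c i * u i x)
      ≤ (k : ℝ) * ∑ i, c i ^ 2 * H1SqR (u i) := by
  have hint : ∀ i : Fin k, Integrable (fun x => ‖fderiv ℝ (u i) x‖ ^ 2 + u i x ^ 2) volume :=
    fun i => cws_integrable_H1_integrand (hu i)
  have hrhs : (k : ℝ) * ∑ i, c i ^ 2 * H1SqR (u i)
      = ∫ x, (k : ℝ) * ∑ i, c i ^ 2 * (‖fderiv ℝ (u i) x‖ ^ 2 + u i x ^ 2) := by
    rw [integral_const_mul]
    congr 1
    rw [integral_finset_sum _ (fun i _ => (hint i).const_mul _)]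
    exact Finset.sum_congr rfl fun i _ => (integral_const_mul _ _).symm
  rw [hrhs, H1SqR]
  refine integral_mono_of_nonneg (ae_of_all _ fun x => by positivity)
    (((integrable_finset_sum _ fun i _ => (hint i).const_mul _).const_mul _))
    (ae_of_all _ fun x => ?_)
  have hD : fderiv ℝ (fun y => ∑ i, c i * u i y) x = ∑ i, c i • fderiv ℝ (u i) x := by
    rw [fderiv_fun_sum fun i _ => ((hu i).1 x).const_mul (c i)]
    congr 1; funext i
    exact fderiv_const_mul ((hu i).1 x) (c i)
  have h1 : ‖fderiv ℝ (fun y => ∑ i, c i * u i y) x‖ ^ 2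
      ≤ (k:ℝ) * ∑ i, c i ^ 2 * ‖fderiv ℝ (u i) x‖ ^ 2 := by
    calc ‖fderiv ℝ (fun y => ∑ i, c i * u i y) x‖ ^ 2
        ≤ (∑ i, |c i| * ‖fderiv ℝ (u i) x‖) ^ 2 := by
          rw [hD]
          refine pow_le_pow_left₀ (norm_nonneg _) ?_ 2
          refine (norm_sum_le _ _).trans ?_
          refine Finset.sum_le_sum fun i _ => ?_
          rw [norm_smul, Real.norm_eq_abs]
      _ ≤ (Finset.univ.card : ℝ) * ∑ i, (|c i| * ‖fderiv ℝ (u i) x‖) ^ 2 :=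
          sq_sum_le_card_mul_sum_sq
      _ = (k:ℝ) * ∑ i, c i ^ 2 * ‖fderiv ℝ (u i) x‖ ^ 2 := by
          simp [Finset.card_univ, mul_pow, sq_abs]
  have h2 : (∑ i, c i * u i x) ^ 2 ≤ (k:ℝ) * ∑ i, c i ^ 2 * u i x ^ 2 := by
    calc (∑ i, c i * u i x) ^ 2
        ≤ (Finset.univ.card : ℝ) * ∑ i, (c i * u i x) ^ 2 := sq_sum_le_card_mul_sum_sq
      _ = (k:ℝ) * ∑ i, c i ^ 2 * u i x ^ 2 := by simp [Finset.card_univ, mul_pow]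
  calc ‖fderiv ℝ (fun y => ∑ i, c i * u i y) x‖ ^ 2 + (∑ i, c i * u i x) ^ 2
      ≤ (k:ℝ) * ∑ i, c i ^ 2 * ‖fderiv ℝ (u i) x‖ ^ 2
        + (k:ℝ) * ∑ i, c i ^ 2 * u i x ^ 2 := add_le_add h1 h2
    _ = (k:ℝ) * ∑ i, c i ^ 2 * (‖fderiv ℝ (u i) x‖ ^ 2 + u i x ^ 2) := by
        rw [← mul_add, ← Finset.sum_add_distrib]
        congr 1
        exact Finset.sum_congr rfl fun i _ => by ring

/-- The functional vector map on H¹. -/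
def cwsPhiW {ι : Type} [Fintype ι] (W : ι → (EE → ℝ)) (hW : ∀ j, MemLp (W j) 2 volume) :
    ↥(cwsH1sub d) →ₗ[ℝ] EuclideanSpace ℝ ι where
  toFun f := WithLp.toLp 2 (fun j => ∫ x, (f : EE → ℝ) x * W j x)
  map_add' f g := by
    ext j
    have hf : Integrable (fun x => (f : EE → ℝ) x * W j x) volume :=
      cws_integrable_mul_of_memℒp2 f.2.2.1 (hW j)
    have hg : Integrable (fun x => (g : EE → ℝ) x * W j x) volume :=
      cws_integrable_mul_of_memℒp2 g.2.2.1 (hW j)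
    show (∫ x, ((f : EE → ℝ) + (g : EE → ℝ)) x * W j x) = _
    simp only [Pi.add_apply, add_mul]
    rw [integral_add hf hg]
    rfl
  map_smul' c f := by
    ext j
    show (∫ x, (c • (f : EE → ℝ)) x * W j x) = _
    simp only [Pi.smul_apply, smul_eq_mul, mul_assoc]
    rw [integral_const_mul]
    rfl

lemma cws_decompW {ι : Type} [Fintype ι] (W : ι → (EE → ℝ)) (hW : ∀ j, MemLp (W j) 2 volume) :
    ∃ K : ℝ, 0 < K ∧ ∀ f : EE → ℝ, MemH1R f →
      ∃ h : EE → ℝ, MemH1R h ∧ MemH1R (fun x => f x - h x) ∧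
        (∀ j, (∫ x, (f x - h x) * W j x) = 0) ∧
        H1SqR h ≤ K * ∑ j, (∫ x, f x * W j x) ^ 2 := by
  classical
  set φ := cwsPhiW W hW with hφdef
  set R := LinearMap.range φ
  set k := Module.finrank ℝ ↥R
  set b : Module.Basis (Fin k) ℝ ↥R := Module.finBasis ℝ ↥R
  have hpre : ∀ i : Fin k, ∃ n : ↥(cwsH1sub d), φ n = (b i : EuclideanSpace ℝ ι) :=
    fun i => (b i).2
  choose n hn using hpre
  have hcoord : ∀ i : Fin k, ∃ Ki : ℝ, 0 ≤ Ki ∧ ∀ v : ↥R, |b.equivFun v i| ≤ Ki * ‖v‖ := by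
    intro i
    set ℓ : ↥R →ₗ[ℝ] ℝ := (LinearMap.proj i).comp b.equivFun.toLinearMap
    set L := LinearMap.toContinuousLinearMap ℓ
    refine ⟨‖L‖, ContinuousLinearMap.opNorm_nonneg _, fun v => ?_⟩
    have := L.le_opNorm v
    simpa [L, ℓ] using this
  choose Ki hKi0 hKi using hcoord
  set Hs : Fin k → ℝ := fun i => H1SqR ((n i : EE → ℝ))
  set K : ℝ := (k : ℝ) * ∑ i, Ki i ^ 2 * Hs i + 1
  have hHs : ∀ i, 0 ≤ Hs i := fun i => cws_H1SqR_nonneg _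
  have hKpos : 0 < K := by
    have : 0 ≤ (k : ℝ) * ∑ i, Ki i ^ 2 * Hs i :=
      mul_nonneg (Nat.cast_nonneg _)
        (Finset.sum_nonneg fun i _ => mul_nonneg (sq_nonneg _) (hHs i))
    simp only [K]; linarith
  refine ⟨K, hKpos, fun f hf => ?_⟩
  set fS : ↥(cwsH1sub d) := ⟨f, hf⟩
  set v : ↥R := ⟨φ fS, LinearMap.mem_range_self _ _⟩
  set c : Fin k → ℝ := fun i => b.equivFun v i
  set hS : ↥(cwsH1sub d) := ∑ i, c i • n i
  have hφh : φ hS = (v : EuclideanSpace ℝ ι) := by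
    have : φ hS = ∑ i, c i • (b i : EuclideanSpace ℝ ι) := by
      simp only [hS, map_sum]
      exact Finset.sum_congr rfl fun i _ => by rw [_root_.map_smul, hn]
    rw [this]
    have := b.sum_equivFun v
    calc ∑ i, c i • (b i : EuclideanSpace ℝ ι)
        = ((∑ i, c i • b i : ↥R) : EuclideanSpace ℝ ι) := by
          push_cast; rfl
      _ = (v : EuclideanSpace ℝ ι) := by rw [this]
  have hcoefun : (hS : EE → ℝ) = fun x => ∑ i, c i * (n i : EE → ℝ) x := by
    have h1 : (hS : EE → ℝ) = ∑ i, ((c i • n i : ↥(cwsH1sub d)) : EE → ℝ) :=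
      map_sum ((cwsH1sub d).subtype) _ _
    funext x
    rw [h1, Finset.sum_apply]
    rfl
  refine ⟨(hS : EE → ℝ), hS.2, ?_, ?_, ?_⟩
  · have := (sub_mem hf hS.2 : f - (hS : EE → ℝ) ∈ cwsH1sub d)
    have heq : (fun x => f x - (hS : EE → ℝ) x) = f - (hS : EE → ℝ) := rfl
    rw [heq]; exact this
  · intro j
    have h0 : φ (fS - hS) = 0 := by
      rw [map_sub, hφh]; simp [v]
    have : (∫ x, ((fS - hS : ↥(cwsH1sub d)) : EE → ℝ) x * W j x) = 0 := by
      have := congrArg (fun v => v j) h0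
      exact this
    simpa using this
  · have hb : H1SqR (hS : EE → ℝ) ≤ (k : ℝ) * ∑ i, c i ^ 2 * Hs i := by
      rw [hcoefun]
      exact cws_H1SqR_sum_le _ (fun i => (n i).2) c
    have hnormv : ‖v‖ ^ 2 = ∑ j, (∫ x, f x * W j x) ^ 2 := by
      have h1 : ‖v‖ = ‖(v : EuclideanSpace ℝ ι)‖ := rfl
      rw [h1, EuclideanSpace.norm_eq, Real.sq_sqrt (by positivity)]
      exact Finset.sum_congr rfl fun j _ => by simp [v, φ, cwsPhiW, fS]
    have hc2 : ∀ i, c i ^ 2 ≤ Ki i ^ 2 * ‖v‖ ^ 2 := by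
      intro i
      have := hKi i v
      have h2 : |c i| ^ 2 ≤ (Ki i * ‖v‖) ^ 2 :=
        pow_le_pow_left₀ (abs_nonneg _) this 2
      calc c i ^ 2 = |c i| ^ 2 := (sq_abs _).symm
        _ ≤ (Ki i * ‖v‖) ^ 2 := h2
        _ = Ki i ^ 2 * ‖v‖ ^ 2 := by ring
    calc H1SqR (hS : EE → ℝ) ≤ (k : ℝ) * ∑ i, c i ^ 2 * Hs i := hb
      _ ≤ (k : ℝ) * ∑ i, (Ki i ^ 2 * ‖v‖ ^ 2) * Hs i := by
          refine mul_le_mul_of_nonneg_left ?_ (Nat.cast_nonneg _)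
          exact Finset.sum_le_sum fun i _ => mul_le_mul_of_nonneg_right (hc2 i) (hHs i)
      _ = ((k : ℝ) * ∑ i, Ki i ^ 2 * Hs i) * ‖v‖ ^ 2 := by
          rw [Finset.mul_sum, Finset.mul_sum, Finset.sum_mul]
          exact Finset.sum_congr rfl fun i _ => by ring
      _ ≤ K * ‖v‖ ^ 2 := by
          have h0 : (0:ℝ) ≤ ‖v‖ ^ 2 := by positivity
          have hKK : (k : ℝ) * ∑ i, Ki i ^ 2 * Hs i ≤ K := by simp only [K]; linarith
          exact mul_le_mul_of_nonneg_right hKK h0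
      _ = K * ∑ j, (∫ x, f x * W j x) ^ 2 := by rw [hnormv]

lemma cws_sqrt_add_le {a b c e : ℝ} (ha : 0 ≤ a) (hb : 0 ≤ b) (hc : 0 ≤ c)
    (he : 0 ≤ e) : Real.sqrt (a*b) + Real.sqrt (c*e) ≤ Real.sqrt ((a+c)*(b+e)) := by
  rw [Real.sqrt_mul ha, Real.sqrt_mul hc]
  have h1 : (Real.sqrt a * Real.sqrt b + Real.sqrt c * Real.sqrt e) ^ 2 ≤ (a+c)*(b+e) := by
    nlinarith [Real.sq_sqrt ha, Real.sq_sqrt hb, Real.sq_sqrt hc, Real.sq_sqrt he,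
      sq_nonneg (Real.sqrt a * Real.sqrt e - Real.sqrt c * Real.sqrt b),
      Real.sqrt_nonneg a, Real.sqrt_nonneg b, Real.sqrt_nonneg c, Real.sqrt_nonneg e]
  have h2 : (0:ℝ) ≤ Real.sqrt a * Real.sqrt b + Real.sqrt c * Real.sqrt e := by positivity
  have h3 := Real.sqrt_le_sqrt h1
  rwa [Real.sqrt_sq h2] at h3

lemma cws_two_mul_sqrt_le {M P H ε : ℝ} (hM : 0 ≤ M) (hP : 0 ≤ P) (hH : 0 ≤ H) (hε : 0 < ε) :
    2 * M * Real.sqrt (P * H) ≤ ε * P + (M^2/ε) * H := by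
  rw [Real.sqrt_mul hP]
  have hA : M^2 = (M^2/ε)*ε := by field_simp
  nlinarith [Real.sq_sqrt hP, Real.sq_sqrt hH, Real.sqrt_nonneg P, Real.sqrt_nonneg H,
    sq_nonneg (ε * Real.sqrt P - M * Real.sqrt H), mul_pos hε hε, hε]

lemma cws_integrable_cross {g h : EE → ℝ} (hg : MemH1R g) (hh : MemH1R h) :
    Integrable (fun x => ‖fderiv ℝ g x‖ * ‖fderiv ℝ h x‖ + |g x| * |h x|) volume := by
  refine Integrable.add ?_ ?_
  · exact cws_integrable_mul_of_memℒp2 hg.2.2.norm hh.2.2.norm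
  · have h1 := hg.2.1.norm
    have h2 := hh.2.1.norm
    simp only [Real.norm_eq_abs] at h1 h2
    exact cws_integrable_mul_of_memℒp2 h1 h2

lemma cws_cross_bound {g h : EE → ℝ} (hg : MemH1R g) (hh : MemH1R h) :
    ∫ x, (‖fderiv ℝ g x‖ * ‖fderiv ℝ h x‖ + |g x| * |h x|)
      ≤ Real.sqrt (H1SqR g) * Real.sqrt (H1SqR h) := by
  set u : EE → ℝ := fun x => Real.sqrt (‖fderiv ℝ g x‖ ^ 2 + g x ^ 2) with hu
  set v : EE → ℝ := fun x => Real.sqrt (‖fderiv ℝ h x‖ ^ 2 + h x ^ 2) with hv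
  have hu0 : ∀ x, 0 ≤ u x := fun x => Real.sqrt_nonneg _
  have hv0 : ∀ x, 0 ≤ v x := fun x => Real.sqrt_nonneg _
  have husq : ∀ x, u x ^ 2 = ‖fderiv ℝ g x‖ ^ 2 + g x ^ 2 := fun x =>
    Real.sq_sqrt (by positivity)
  have hvsq : ∀ x, v x ^ 2 = ‖fderiv ℝ h x‖ ^ 2 + h x ^ 2 := fun x =>
    Real.sq_sqrt (by positivity)
  have humeas : AEStronglyMeasurable u volume := by
    refine Continuous.comp_aestronglyMeasurable Real.continuous_sqrt ?_
    exact ((hg.2.2.aestronglyMeasurable.norm.pow 2).add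
      ((hg.1.continuous.aestronglyMeasurable).pow 2))
  have hvmeas : AEStronglyMeasurable v volume := by
    refine Continuous.comp_aestronglyMeasurable Real.continuous_sqrt ?_
    exact ((hh.2.2.aestronglyMeasurable.norm.pow 2).add
      ((hh.1.continuous.aestronglyMeasurable).pow 2))
  have huL2 : MemLp u 2 volume := by
    rw [memLp_two_iff_integrable_sq humeas]
    exact (cws_integrable_H1_integrand hg).congr (ae_of_all _ fun x => (husq x).symm)
  have hvL2 : MemLp v 2 volume := by
    rw [memLp_two_iff_integrable_sq hvmeas]
    exact (cws_integrable_H1_integrand hh).congr (ae_of_all _ fun x => (hvsq x).symm)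
  have hpoint : ∀ x, ‖fderiv ℝ g x‖ * ‖fderiv ℝ h x‖ + |g x| * |h x| ≤ u x * v x := by
    intro x
    have h1 : (‖fderiv ℝ g x‖ * ‖fderiv ℝ h x‖ + |g x| * |h x|) ^ 2
        ≤ (u x ^ 2) * (v x ^ 2) := by
      rw [husq, hvsq]
      nlinarith [sq_nonneg (‖fderiv ℝ g x‖ * |h x| - |g x| * ‖fderiv ℝ h x‖),
        norm_nonneg (fderiv ℝ g x), norm_nonneg (fderiv ℝ h x), abs_nonneg (g x),
        abs_nonneg (h x), sq_abs (g x), sq_abs (h x)]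
    have h2 : (0:ℝ) ≤ ‖fderiv ℝ g x‖ * ‖fderiv ℝ h x‖ + |g x| * |h x| := by positivity
    nlinarith [mul_nonneg (hu0 x) (hv0 x)]
  have hintuv : Integrable (fun x => u x * v x) volume :=
    cws_integrable_mul_of_memℒp2 huL2 hvL2
  calc ∫ x, (‖fderiv ℝ g x‖ * ‖fderiv ℝ h x‖ + |g x| * |h x|)
      ≤ ∫ x, u x * v x := integral_mono (cws_integrable_cross hg hh) hintuv hpoint
    _ ≤ Real.sqrt (∫ x, u x ^ 2) * Real.sqrt (∫ x, v x ^ 2) :=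
        cws_integral_CS huL2 hvL2 hu0 hv0
    _ = Real.sqrt (H1SqR g) * Real.sqrt (H1SqR h) := by
        rw [H1SqR, H1SqR]
        congr 1
        · congr 1; exact integral_congr_ae (ae_of_all _ fun x => husq x)
        · congr 1; exact integral_congr_ae (ae_of_all _ fun x => hvsq x)

lemma cws_comp_bound {F : Type*} [NormedAddCommGroup F] (Dg Dh : F) (gv hv w M : ℝ)
    (hM : 1 ≤ M) (hw : |1 - w| ≤ M) :
    -(2*M*(‖Dg‖*‖Dh‖ + |gv| * |hv|) + M*(‖Dh‖^2 + hv^2))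
      ≤ (‖Dg + Dh‖^2 + (gv+hv)^2 - w*(gv+hv)^2) - (‖Dg‖^2 + gv^2 - w*gv^2) := by
  have h1 : ‖Dg‖ - ‖Dh‖ ≤ ‖Dg + Dh‖ := by
    have : ‖Dg‖ ≤ ‖Dg + Dh‖ + ‖Dh‖ := by
      calc ‖Dg‖ = ‖(Dg + Dh) - Dh‖ := by rw [add_sub_cancel_right]
        _ ≤ ‖Dg + Dh‖ + ‖Dh‖ := norm_sub_le _ _
    linarith
  have h1b : ‖Dh‖ - ‖Dg‖ ≤ ‖Dg + Dh‖ := by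
    have : ‖Dh‖ ≤ ‖Dg + Dh‖ + ‖Dg‖ := by
      calc ‖Dh‖ = ‖(Dg + Dh) - Dg‖ := by rw [add_sub_cancel_left]
        _ ≤ ‖Dg + Dh‖ + ‖Dg‖ := norm_sub_le _ _
    linarith
  have hgrad : -(2*‖Dg‖*‖Dh‖ + ‖Dh‖^2) ≤ ‖Dg + Dh‖^2 - ‖Dg‖^2 := by
    nlinarith [mul_nonneg (sub_nonneg.2 h1) (sub_nonneg.2 h1b), sq_nonneg ‖Dh‖]
  have h2 : |(gv+hv)^2 - gv^2| ≤ 2 * |gv| * |hv| + hv^2 := by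
    have he : (gv+hv)^2 - gv^2 = 2*gv*hv + hv^2 := by ring
    rw [he]
    calc |2*gv*hv + hv^2| ≤ |2*gv*hv| + |hv^2| := abs_add_le _ _
      _ = 2 * |gv| * |hv| + hv^2 := by
          rw [abs_mul, abs_mul, abs_two, abs_pow, sq_abs]
  have hval : -(M*(2 * |gv| * |hv| + hv^2)) ≤ (1 - w)*((gv+hv)^2 - gv^2) := by
    have habs : |(1-w)*((gv+hv)^2 - gv^2)| ≤ M*(2 * |gv| * |hv| + hv^2) := by
      rw [abs_mul]
      exact mul_le_mul hw h2 (abs_nonneg _) (by linarith)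
    linarith [neg_abs_le ((1-w)*((gv+hv)^2 - gv^2))]
  have e1 : 0 ≤ (M-1)*(‖Dg‖*‖Dh‖) :=
    mul_nonneg (by linarith) (mul_nonneg (norm_nonneg _) (norm_nonneg _))
  have e2 : 0 ≤ (M-1)*‖Dh‖^2 := mul_nonneg (by linarith) (sq_nonneg _)
  nlinarith [hgrad, hval, e1, e2]

lemma cws_H1_le_two {g h : EE → ℝ} (hg : MemH1R g) (hh : MemH1R h) :
    H1SqR (fun x => g x + h x) ≤ 2 * H1SqR g + 2 * H1SqR h := by
  have hrhs : 2 * H1SqR g + 2 * H1SqR h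
      = ∫ x, (2*(‖fderiv ℝ g x‖ ^ 2 + g x ^ 2) + 2*(‖fderiv ℝ h x‖ ^ 2 + h x ^ 2)) := by
    rw [integral_add ((cws_integrable_H1_integrand hg).const_mul 2)
      ((cws_integrable_H1_integrand hh).const_mul 2), integral_const_mul, integral_const_mul]
    rfl
  rw [hrhs, H1SqR]
  refine integral_mono_of_nonneg (ae_of_all _ fun x => by positivity)
    (((cws_integrable_H1_integrand hg).const_mul 2).add
      ((cws_integrable_H1_integrand hh).const_mul 2))
    (ae_of_all _ fun x => ?_)
  have hD : fderiv ℝ (fun y => g y + h y) x = fderiv ℝ g x + fderiv ℝ h x :=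
    fderiv_add (hg.1 x) (hh.1 x)
  have h1 : ‖fderiv ℝ (fun y => g y + h y) x‖ ^ 2
      ≤ 2*‖fderiv ℝ g x‖^2 + 2*‖fderiv ℝ h x‖^2 := by
    rw [hD]
    nlinarith [norm_add_le (fderiv ℝ g x) (fderiv ℝ h x), norm_nonneg (fderiv ℝ g x),
      norm_nonneg (fderiv ℝ h x), norm_nonneg (fderiv ℝ g x + fderiv ℝ h x),
      sq_nonneg (‖fderiv ℝ g x‖ - ‖fderiv ℝ h x‖)]
  have h2 : (g x + h x)^2 ≤ 2*g x^2 + 2*h x^2 := by nlinarith [sq_nonneg (g x - h x)]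
  dsimp only
  linarith

lemma cws_abs_coord_le_norm (x : EuclideanSpace ℝ (Fin d)) (i : Fin d) : |x i| ≤ ‖x‖ := by
  rw [EuclideanSpace.norm_eq]
  have h1 : |x i| = Real.sqrt (‖x i‖^2) := by
    rw [Real.sqrt_sq_eq_abs, Real.norm_eq_abs, abs_abs]
  rw [h1]
  apply Real.sqrt_le_sqrt
  exact Finset.single_le_sum (fun j _ => sq_nonneg ‖x j‖) (Finset.mem_univ i)

lemma cws_integrable_Lquad_integrand (Q : EE → ℝ)
    (hqm : AEStronglyMeasurable (fun x : EE => Q x ^ ((4:ℝ)/d)) volume)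
    {B : ℝ} (hqB : ∀ x, |Q x ^ ((4:ℝ)/d)| ≤ B) {f₁ f₂ : EE → ℝ}
    (h1 : MemH1R f₁) (h2 : MemH1R f₂) :
    Integrable (fun x : EE =>
      ‖fderiv ℝ f₁ x‖ ^ 2 + f₁ x ^ 2 - (1 + 4 / (d : ℝ)) * Q x ^ ((4 : ℝ) / d) * f₁ x ^ 2
      + ‖fderiv ℝ f₂ x‖ ^ 2 + f₂ x ^ 2 - Q x ^ ((4 : ℝ) / d) * f₂ x ^ 2) volume := by
  have hmul1 : Integrable (fun x : EE => (1 + 4 / (d : ℝ)) * Q x ^ ((4 : ℝ) / d) * f₁ x ^ 2)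
      volume := by
    have := (h1.2.1.integrable_sq).bdd_mul
      (((aestronglyMeasurable_const (b := (1 + 4 / (d : ℝ)))).mul hqm))
      (c := (1 + |4 / (d:ℝ)|) * B) (ae_of_all _ fun x => by
        simp only [Pi.mul_apply]
        rw [Real.norm_eq_abs, abs_mul]
        refine mul_le_mul ?_ (hqB x) (abs_nonneg _) (by positivity)
        calc |1 + 4/(d:ℝ)| ≤ |1| + |4/(d:ℝ)| := abs_add_le _ _
          _ = 1 + |4/(d:ℝ)| := by rw [abs_one])
    simpa [mul_assoc] using this
  have hmul2 : Integrable (fun x : EE => Q x ^ ((4 : ℝ) / d) * f₂ x ^ 2) volume :=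
    (h2.2.1.integrable_sq).bdd_mul hqm (c := B) (ae_of_all _ fun x => by rw [Real.norm_eq_abs]; exact hqB x)
  exact ((((h1.2.2.norm.integrable_sq.add h1.2.1.integrable_sq).sub hmul1).add
    h2.2.2.norm.integrable_sq).add h2.2.1.integrable_sq).sub hmul2

/-- first-component directions -/
def cwsW1 (Q : EuclideanSpace ℝ (Fin d) → ℝ) :
    Unit ⊕ (Fin d ⊕ Unit) → (EuclideanSpace ℝ (Fin d) → ℝ)
  | Sum.inl _ => Q
  | Sum.inr (Sum.inl i) => fun x => x i * Q x
  | Sum.inr (Sum.inr _) => fun x => ‖x‖ ^ 2 * Q x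

/-- second-component directions -/
def cwsW2 (Q ρ : EuclideanSpace ℝ (Fin d) → ℝ) :
    Fin d ⊕ (Unit ⊕ Unit) → (EuclideanSpace ℝ (Fin d) → ℝ)
  | Sum.inl i => fun x => fderiv ℝ Q x (EuclideanSpace.single i 1)
  | Sum.inr (Sum.inl _) => lamOp Q
  | Sum.inr (Sum.inr _) => ρ

end AuxLemmas

/-- **Coercivity up to the unstable directions**: if the quadratic form `(Lf, f)` of the
linearized operator around the ground state `Q` is coercive on the orthogonality class
`K`, then for every `f = f₁ + i f₂ ∈ H¹` one has
`(Lf, f) ≥ C₁ ‖f‖_{H¹}² − C₂ Scal(f)`. -/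
theorem coercivity_with_scal (d : ℕ) (hd : d = 1 ∨ d = 2)
    (Q ρ : EuclideanSpace ℝ (Fin d) → ℝ)
    (hQsmooth : ContDiff ℝ (⊤ : ℕ∞) Q)
    (hQpos : ∀ x, 0 < Q x)
    (hQradial : ∀ x y : EuclideanSpace ℝ (Fin d), ‖x‖ = ‖y‖ → Q x = Q y)
    (hQeq : ∀ x, lapR Q x - Q x + Q x ^ (1 + (4 : ℝ) / d) = 0)
    (hQdecay : ∃ C δ : ℝ, 0 < C ∧ 0 < δ ∧ ∀ x,
      |Q x| + ‖fderiv ℝ Q x‖ ≤ C * Real.exp (-δ * ‖x‖))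
    (hρsmooth : ContDiff ℝ (⊤ : ℕ∞) ρ)
    (hρradial : ∀ x y : EuclideanSpace ℝ (Fin d), ‖x‖ = ‖y‖ → ρ x = ρ y)
    (hρH1 : MemH1R ρ)
    (hρeq : ∀ x, Lplus Q ρ x = -(‖x‖ ^ 2 * Q x))
    (hρdecay : ∃ C δ : ℝ, 0 < C ∧ 0 < δ ∧ ∀ x,
      |ρ x| + ‖fderiv ℝ ρ x‖ ≤ C * Real.exp (-δ * ‖x‖))
    (C : ℝ) (hC : 0 < C)
    (hcoerc : ∀ f₁ f₂ : EuclideanSpace ℝ (Fin d) → ℝ,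
      MemH1R f₁ → MemH1R f₂ → MemK Q ρ f₁ f₂ →
      C * (H1SqR f₁ + H1SqR f₂) ≤ Lquad Q f₁ f₂) :
    ∃ C₁ C₂ : ℝ, 0 < C₁ ∧ 0 < C₂ ∧
      ∀ f₁ f₂ : EuclideanSpace ℝ (Fin d) → ℝ, MemH1R f₁ → MemH1R f₂ →
        C₁ * (H1SqR f₁ + H1SqR f₂) - C₂ * ScalQ Q ρ f₁ f₂ ≤ Lquad Q f₁ f₂ := by
  classical
  obtain ⟨C₀, δ, hC₀, hδ, hdec⟩ := hQdecay
  have hQle : ∀ x : EuclideanSpace ℝ (Fin d), |Q x| ≤ C₀ * Real.exp (-(δ * ‖x‖)) := by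
    intro x
    have h := hdec x
    rw [neg_mul] at h
    linarith [norm_nonneg (fderiv ℝ Q x)]
  have hDQle : ∀ x : EuclideanSpace ℝ (Fin d), ‖fderiv ℝ Q x‖ ≤ C₀ * Real.exp (-(δ * ‖x‖)) := by
    intro x
    have h := hdec x
    rw [neg_mul] at h
    linarith [abs_nonneg (Q x)]
  have hfac1 : ∀ t : ℝ, 0 ≤ t → (1:ℝ) ≤ (1+t)^2 := fun t ht => by nlinarith
  have hfac2 : ∀ t : ℝ, 0 ≤ t → t ≤ (1+t)^2 := fun t ht => by nlinarith
  have hfac3 : ∀ t : ℝ, 0 ≤ t → t^2 ≤ (1+t)^2 := fun t ht => by nlinarith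
  have hQbd : ∀ x : EuclideanSpace ℝ (Fin d),
      |Q x| ≤ C₀ * (1 + ‖x‖) ^ 2 * Real.exp (-(δ * ‖x‖)) := by
    intro x
    calc |Q x| ≤ C₀ * Real.exp (-(δ * ‖x‖)) := hQle x
      _ = C₀ * 1 * Real.exp (-(δ * ‖x‖)) := by ring
      _ ≤ C₀ * (1 + ‖x‖) ^ 2 * Real.exp (-(δ * ‖x‖)) := by
          have := hfac1 ‖x‖ (norm_nonneg x)
          gcongr
  have hDQbd : ∀ x : EuclideanSpace ℝ (Fin d),
      ‖fderiv ℝ Q x‖ ≤ C₀ * (1 + ‖x‖) ^ 2 * Real.exp (-(δ * ‖x‖)) := by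
    intro x
    calc ‖fderiv ℝ Q x‖ ≤ C₀ * Real.exp (-(δ * ‖x‖)) := hDQle x
      _ = C₀ * 1 * Real.exp (-(δ * ‖x‖)) := by ring
      _ ≤ C₀ * (1 + ‖x‖) ^ 2 * Real.exp (-(δ * ‖x‖)) := by
          have := hfac1 ‖x‖ (norm_nonneg x)
          gcongr
  -- the six directions are in L²
  have hW1 : ∀ j, MemLp (cwsW1 Q j) 2 (volume : Measure (EuclideanSpace ℝ (Fin d))) := by
    rintro (u | i | u)
    · exact cws_memℒp_two_of_decay hQsmooth.continuous.aestronglyMeasurable hδ hQbd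
    · refine cws_memℒp_two_of_decay
        (((EuclideanSpace.proj i).continuous.mul hQsmooth.continuous).aestronglyMeasurable)
        hδ (A := C₀) ?_
      intro x
      calc |x i * Q x| = |x i| * |Q x| := abs_mul _ _
        _ ≤ (1 + ‖x‖) ^ 2 * (C₀ * Real.exp (-(δ * ‖x‖))) := by
            refine mul_le_mul ((cws_abs_coord_le_norm x i).trans
              (hfac2 _ (norm_nonneg x))) (hQle x) (abs_nonneg _) (by positivity)
        _ = C₀ * (1 + ‖x‖) ^ 2 * Real.exp (-(δ * ‖x‖)) := by ring
    · refine cws_memℒp_two_of_decay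
        (((continuous_norm.pow 2).mul hQsmooth.continuous).aestronglyMeasurable)
        hδ (A := C₀) ?_
      intro x
      calc |‖x‖ ^ 2 * Q x| = |‖x‖ ^ 2| * |Q x| := abs_mul _ _
        _ = ‖x‖ ^ 2 * |Q x| := by rw [abs_of_nonneg (by positivity : (0:ℝ) ≤ ‖x‖ ^ 2)]
        _ ≤ (1 + ‖x‖) ^ 2 * (C₀ * Real.exp (-(δ * ‖x‖))) := by
            refine mul_le_mul (hfac3 _ (norm_nonneg x)) (hQle x) (abs_nonneg _) (by positivity)
        _ = C₀ * (1 + ‖x‖) ^ 2 * Real.exp (-(δ * ‖x‖)) := by ring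
  have hW2 : ∀ j, MemLp (cwsW2 Q ρ j) 2 (volume : Measure (EuclideanSpace ℝ (Fin d))) := by
    rintro (i | u | u)
    · refine cws_memℒp_two_of_decay
        (((hQsmooth.fderiv_right (m := 0) (by simp)).continuous.clm_apply
          continuous_const).aestronglyMeasurable) hδ (A := C₀) ?_
      intro x
      calc |fderiv ℝ Q x (EuclideanSpace.single i 1)|
          = ‖fderiv ℝ Q x (EuclideanSpace.single i 1)‖ := (Real.norm_eq_abs _).symm
        _ ≤ ‖fderiv ℝ Q x‖ * ‖EuclideanSpace.single i (1:ℝ)‖ :=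
            ContinuousLinearMap.le_opNorm _ _
        _ = ‖fderiv ℝ Q x‖ := by rw [EuclideanSpace.norm_single, norm_one, mul_one]
        _ ≤ C₀ * (1 + ‖x‖) ^ 2 * Real.exp (-(δ * ‖x‖)) := hDQbd x
    · refine cws_memℒp_two_of_decay ?_ hδ (A := ((d:ℝ)/2 + 1) * C₀) ?_
      · have : Continuous (fun x : EuclideanSpace ℝ (Fin d) =>
            ((d:ℝ)/2) * Q x + fderiv ℝ Q x x) :=
          (continuous_const.mul hQsmooth.continuous).add
            ((hQsmooth.fderiv_right (m := 0) (by simp)).continuous.clm_apply continuous_id)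
        exact this.aestronglyMeasurable
      · intro x
        have e1 : ((d:ℝ)/2) * |Q x| ≤ ((d:ℝ)/2) * (C₀ * (1 + ‖x‖) ^ 2 * Real.exp (-(δ * ‖x‖))) :=
          mul_le_mul_of_nonneg_left (hQbd x) (by positivity)
        have e2 : |fderiv ℝ Q x x| ≤ C₀ * (1 + ‖x‖) ^ 2 * Real.exp (-(δ * ‖x‖)) := by
          calc |fderiv ℝ Q x x| = ‖fderiv ℝ Q x x‖ := (Real.norm_eq_abs _).symm
            _ ≤ ‖fderiv ℝ Q x‖ * ‖x‖ := ContinuousLinearMap.le_opNorm _ _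
            _ ≤ (C₀ * Real.exp (-(δ * ‖x‖))) * (1 + ‖x‖) ^ 2 := by
                refine mul_le_mul (hDQle x) (hfac2 _ (norm_nonneg x)) (norm_nonneg x) ?_
                positivity
            _ = C₀ * (1 + ‖x‖) ^ 2 * Real.exp (-(δ * ‖x‖)) := by ring
        calc |lamOp Q x| = |((d:ℝ)/2) * Q x + fderiv ℝ Q x x| := rfl
          _ ≤ |((d:ℝ)/2) * Q x| + |fderiv ℝ Q x x| := abs_add_le _ _
          _ = ((d:ℝ)/2) * |Q x| + |fderiv ℝ Q x x| := by
              rw [abs_mul, abs_of_nonneg (by positivity : (0:ℝ) ≤ (d:ℝ)/2)]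
          _ ≤ ((d:ℝ)/2) * (C₀ * (1 + ‖x‖) ^ 2 * Real.exp (-(δ * ‖x‖)))
              + C₀ * (1 + ‖x‖) ^ 2 * Real.exp (-(δ * ‖x‖)) := add_le_add e1 e2
          _ = ((d:ℝ)/2 + 1) * C₀ * (1 + ‖x‖) ^ 2 * Real.exp (-(δ * ‖x‖)) := by ring
    · exact hρH1.2.1
  obtain ⟨K₁, hK₁pos, hdec1⟩ := cws_decompW (cwsW1 Q) hW1
  obtain ⟨K₂, hK₂pos, hdec2⟩ := cws_decompW (cwsW2 Q ρ) hW2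
  -- bound on the nonlinear potential
  have hQC₀ : ∀ x, Q x ≤ C₀ := by
    intro x
    have h1 : Real.exp (-(δ * ‖x‖)) ≤ 1 :=
      Real.exp_le_one_iff.2 (neg_nonpos.2 (by positivity))
    have h2 := hQle x
    have h3 := le_abs_self (Q x)
    have h4 : C₀ * Real.exp (-(δ * ‖x‖)) ≤ C₀ * 1 :=
      mul_le_mul_of_nonneg_left h1 hC₀.le
    linarith
  have hq0 : ∀ x, (0:ℝ) ≤ Q x ^ ((4:ℝ)/d) := fun x => Real.rpow_nonneg (hQpos x).le _
  have hqB : ∀ x, Q x ^ ((4:ℝ)/d) ≤ C₀ ^ ((4:ℝ)/d) := fun x =>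
    Real.rpow_le_rpow (hQpos x).le (hQC₀ x) (by positivity)
  have hB0 : (0:ℝ) ≤ C₀ ^ ((4:ℝ)/d) := Real.rpow_nonneg hC₀.le _
  have hqabs : ∀ x, |Q x ^ ((4:ℝ)/d)| ≤ C₀ ^ ((4:ℝ)/d) := fun x => by
    rw [abs_of_nonneg (hq0 x)]; exact hqB x
  have hqm : AEStronglyMeasurable (fun x : EuclideanSpace ℝ (Fin d) => Q x ^ ((4:ℝ)/d)) volume :=
    (hQsmooth.continuous.rpow_const (fun x => Or.inl (ne_of_gt (hQpos x)))).aestronglyMeasurable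
  have hcc0 : (0:ℝ) ≤ 1 + 4/(d:ℝ) := by positivity
  have hcc1 : (1:ℝ) ≤ 1 + 4/(d:ℝ) := by
    have : (0:ℝ) ≤ 4/(d:ℝ) := by positivity
    linarith
  set B : ℝ := C₀ ^ ((4:ℝ)/d) with hBdef
  clear_value B
  set M : ℝ := 1 + (1 + 4/(d:ℝ)) * B with hMdef
  clear_value M
  have hM1 : (1:ℝ) ≤ M := by
    have : (0:ℝ) ≤ (1 + 4/(d:ℝ)) * B := mul_nonneg hcc0 hB0
    simp only [hMdef]; linarith
  have hM0 : (0:ℝ) ≤ M := by linarith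
  have hw1 : ∀ x, |1 - (1 + 4/(d:ℝ)) * Q x ^ ((4:ℝ)/d)| ≤ M := by
    intro x
    have ha0 : 0 ≤ (1 + 4/(d:ℝ)) * Q x ^ ((4:ℝ)/d) := mul_nonneg hcc0 (hq0 x)
    have haB : (1 + 4/(d:ℝ)) * Q x ^ ((4:ℝ)/d) ≤ (1 + 4/(d:ℝ)) * B :=
      mul_le_mul_of_nonneg_left (hqB x) hcc0
    rw [abs_le, hMdef]
    constructor <;> nlinarith [ha0, haB]
  have hw2 : ∀ x, |1 - Q x ^ ((4:ℝ)/d)| ≤ M := by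
    intro x
    have ha0 := hq0 x
    have haB : Q x ^ ((4:ℝ)/d) ≤ B := hqB x
    have hBM : B ≤ (1 + 4/(d:ℝ)) * B := by nlinarith
    rw [abs_le, hMdef]
    constructor <;> nlinarith [ha0, haB, hBM]
  set M₂ : ℝ := M^2/(C/2) + M with hM₂def
  clear_value M₂
  have hM₂0 : 0 ≤ M₂ := by
    have h1 : 0 ≤ M^2/(C/2) := by positivity
    simp only [hM₂def]; linarith [hM0]
  set Km : ℝ := max K₁ K₂ with hKmdef
  clear_value Km
  have hKm0 : 0 < Km := by
    rw [hKmdef]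
    exact lt_of_lt_of_le hK₁pos (le_max_left _ _)
  refine ⟨C/4, (C/2 + M₂) * Km, by linarith, ?_, ?_⟩
  · have hpos : 0 < C/2 + M₂ := by
      have := half_pos hC
      linarith
    exact mul_pos hpos hKm0
  intro f₁ f₂ hf₁ hf₂
  obtain ⟨h₁, hh₁mem, hg₁mem, horth₁, hb₁⟩ := hdec1 f₁ hf₁
  obtain ⟨h₂, hh₂mem, hg₂mem, horth₂, hb₂⟩ := hdec2 f₂ hf₂
  set g₁ : EuclideanSpace ℝ (Fin d) → ℝ := fun x => f₁ x - h₁ x with hg₁def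
  set g₂ : EuclideanSpace ℝ (Fin d) → ℝ := fun x => f₂ x - h₂ x with hg₂def
  clear_value g₁ g₂
  have hKmem : MemK Q ρ g₁ g₂ := by
    refine ⟨?_, ?_, ?_, ?_, ?_, ?_⟩
    · simpa [hg₁def, cwsW1] using horth₁ (Sum.inl ())
    · intro i
      simpa [hg₁def, cwsW1] using horth₁ (Sum.inr (Sum.inl i))
    · simpa [hg₁def, cwsW1] using horth₁ (Sum.inr (Sum.inr ()))
    · intro i
      simpa [hg₂def, cwsW2] using horth₂ (Sum.inl i)
    · simpa [hg₂def, cwsW2] using horth₂ (Sum.inr (Sum.inl ()))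
    · simpa [hg₂def, cwsW2] using horth₂ (Sum.inr (Sum.inr ()))
  have hcoercg : C * (H1SqR g₁ + H1SqR g₂) ≤ Lquad Q g₁ g₂ :=
    hcoerc g₁ g₂ hg₁mem hg₂mem hKmem
  set If : EuclideanSpace ℝ (Fin d) → ℝ := fun x =>
    ‖fderiv ℝ f₁ x‖ ^ 2 + f₁ x ^ 2 - (1 + 4 / (d : ℝ)) * Q x ^ ((4 : ℝ) / d) * f₁ x ^ 2
      + ‖fderiv ℝ f₂ x‖ ^ 2 + f₂ x ^ 2 - Q x ^ ((4 : ℝ) / d) * f₂ x ^ 2 with hIfdef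
  set Ig : EuclideanSpace ℝ (Fin d) → ℝ := fun x =>
    ‖fderiv ℝ g₁ x‖ ^ 2 + g₁ x ^ 2 - (1 + 4 / (d : ℝ)) * Q x ^ ((4 : ℝ) / d) * g₁ x ^ 2
      + ‖fderiv ℝ g₂ x‖ ^ 2 + g₂ x ^ 2 - Q x ^ ((4 : ℝ) / d) * g₂ x ^ 2 with hIgdef
  clear_value If Ig
  have hIf : Integrable If volume := by
    rw [hIfdef]; exact cws_integrable_Lquad_integrand Q hqm hqabs hf₁ hf₂
  have hIg : Integrable Ig volume := by
    rw [hIgdef]; exact cws_integrable_Lquad_integrand Q hqm hqabs hg₁mem hg₂mem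
  set S : EuclideanSpace ℝ (Fin d) → ℝ := fun x =>
    2*M*((‖fderiv ℝ g₁ x‖ * ‖fderiv ℝ h₁ x‖ + |g₁ x| * |h₁ x|)
          + (‖fderiv ℝ g₂ x‖ * ‖fderiv ℝ h₂ x‖ + |g₂ x| * |h₂ x|))
      + M*((‖fderiv ℝ h₁ x‖ ^ 2 + h₁ x ^ 2) + (‖fderiv ℝ h₂ x‖ ^ 2 + h₂ x ^ 2)) with hSdef
  clear_value S
  have hcrossint1 : Integrable (fun x : EuclideanSpace ℝ (Fin d) =>
      ‖fderiv ℝ g₁ x‖ * ‖fderiv ℝ h₁ x‖ + |g₁ x| * |h₁ x|) volume :=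
    cws_integrable_cross hg₁mem hh₁mem
  have hcrossint2 : Integrable (fun x : EuclideanSpace ℝ (Fin d) =>
      ‖fderiv ℝ g₂ x‖ * ‖fderiv ℝ h₂ x‖ + |g₂ x| * |h₂ x|) volume :=
    cws_integrable_cross hg₂mem hh₂mem
  have hcadd : Integrable (fun x : EuclideanSpace ℝ (Fin d) =>
      (‖fderiv ℝ g₁ x‖ * ‖fderiv ℝ h₁ x‖ + |g₁ x| * |h₁ x|)
        + (‖fderiv ℝ g₂ x‖ * ‖fderiv ℝ h₂ x‖ + |g₂ x| * |h₂ x|)) volume :=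
    hcrossint1.add hcrossint2
  have hu1 : Integrable (fun x : EuclideanSpace ℝ (Fin d) =>
      ‖fderiv ℝ h₁ x‖ ^ 2 + h₁ x ^ 2) volume := cws_integrable_H1_integrand hh₁mem
  have hu2 : Integrable (fun x : EuclideanSpace ℝ (Fin d) =>
      ‖fderiv ℝ h₂ x‖ ^ 2 + h₂ x ^ 2) volume := cws_integrable_H1_integrand hh₂mem
  have huadd : Integrable (fun x : EuclideanSpace ℝ (Fin d) =>
      (‖fderiv ℝ h₁ x‖ ^ 2 + h₁ x ^ 2) + (‖fderiv ℝ h₂ x‖ ^ 2 + h₂ x ^ 2)) volume :=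
    hu1.add hu2
  have hSint : Integrable S volume := by
    rw [hSdef]
    exact (hcadd.const_mul (2*M)).add (huadd.const_mul M)
  have hpt : ∀ x, -(S x) ≤ If x - Ig x := by
    intro x
    have hD1 : fderiv ℝ f₁ x = fderiv ℝ g₁ x + fderiv ℝ h₁ x := by
      have e : fderiv ℝ g₁ x = fderiv ℝ f₁ x - fderiv ℝ h₁ x := by
        rw [hg₁def]
        exact fderiv_sub (hf₁.1 x) (hh₁mem.1 x)
      rw [e]; abel
    have hD2 : fderiv ℝ f₂ x = fderiv ℝ g₂ x + fderiv ℝ h₂ x := by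
      have e : fderiv ℝ g₂ x = fderiv ℝ f₂ x - fderiv ℝ h₂ x := by
        rw [hg₂def]
        exact fderiv_sub (hf₂.1 x) (hh₂mem.1 x)
      rw [e]; abel
    have hv1 : f₁ x = g₁ x + h₁ x := by simp [hg₁def]
    have hv2 : f₂ x = g₂ x + h₂ x := by simp [hg₂def]
    have hc1 := cws_comp_bound (fderiv ℝ g₁ x) (fderiv ℝ h₁ x) (g₁ x) (h₁ x)
      ((1 + 4/(d:ℝ)) * Q x ^ ((4:ℝ)/d)) M hM1 (hw1 x)
    have hc2 := cws_comp_bound (fderiv ℝ g₂ x) (fderiv ℝ h₂ x) (g₂ x) (h₂ x)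
      (Q x ^ ((4:ℝ)/d)) M hM1 (hw2 x)
    simp only [hIfdef, hIgdef, hSdef]
    rw [hD1, hD2, hv1, hv2]
    linarith [hc1, hc2]
  have hsplit : Lquad Q f₁ f₂ = Lquad Q g₁ g₂ + ∫ x, (If x - Ig x) := by
    have e1 : Lquad Q f₁ f₂ = ∫ x, If x := by rw [hIfdef]; rfl
    have e2 : Lquad Q g₁ g₂ = ∫ x, Ig x := by rw [hIgdef]; rfl
    rw [e1, e2, integral_sub hIf hIg]
    ring
  set P : ℝ := H1SqR g₁ + H1SqR g₂ with hPdef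
  set Hh : ℝ := H1SqR h₁ + H1SqR h₂ with hHhdef
  clear_value P Hh
  have hP0 : 0 ≤ P := by
    rw [hPdef]; exact add_nonneg (cws_H1SqR_nonneg _) (cws_H1SqR_nonneg _)
  have hH0 : 0 ≤ Hh := by
    rw [hHhdef]; exact add_nonneg (cws_H1SqR_nonneg _) (cws_H1SqR_nonneg _)
  have hSval : ∫ x, S x = 2*M*((∫ x, (‖fderiv ℝ g₁ x‖ * ‖fderiv ℝ h₁ x‖ + |g₁ x| * |h₁ x|))
      + (∫ x, (‖fderiv ℝ g₂ x‖ * ‖fderiv ℝ h₂ x‖ + |g₂ x| * |h₂ x|))) + M*Hh := by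
    rw [hSdef]
    rw [integral_add (hcadd.const_mul (2*M)) (huadd.const_mul M),
      integral_const_mul, integral_const_mul,
      integral_add hcrossint1 hcrossint2,
      integral_add hu1 hu2, hHhdef]
    rfl
  have hcr1 : (∫ x, (‖fderiv ℝ g₁ x‖ * ‖fderiv ℝ h₁ x‖ + |g₁ x| * |h₁ x|))
      ≤ Real.sqrt (H1SqR g₁ * H1SqR h₁) := by
    have := cws_cross_bound hg₁mem hh₁mem
    rwa [← Real.sqrt_mul (cws_H1SqR_nonneg g₁)] at this
  have hcr2 : (∫ x, (‖fderiv ℝ g₂ x‖ * ‖fderiv ℝ h₂ x‖ + |g₂ x| * |h₂ x|))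
      ≤ Real.sqrt (H1SqR g₂ * H1SqR h₂) := by
    have := cws_cross_bound hg₂mem hh₂mem
    rwa [← Real.sqrt_mul (cws_H1SqR_nonneg g₂)] at this
  have hsqrt : Real.sqrt (H1SqR g₁ * H1SqR h₁) + Real.sqrt (H1SqR g₂ * H1SqR h₂)
      ≤ Real.sqrt (P * Hh) := by
    rw [hPdef, hHhdef]
    exact cws_sqrt_add_le (cws_H1SqR_nonneg _) (cws_H1SqR_nonneg _) (cws_H1SqR_nonneg _)
      (cws_H1SqR_nonneg _)
  have hamgm : 2 * M * Real.sqrt (P * Hh) ≤ (C/2) * P + (M^2/(C/2)) * Hh :=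
    cws_two_mul_sqrt_le hM0 hP0 hH0 (half_pos hC)
  have hSle : ∫ x, S x ≤ (C/2) * P + M₂ * Hh := by
    rw [hSval]
    have hmul : 2*M*((∫ x, (‖fderiv ℝ g₁ x‖ * ‖fderiv ℝ h₁ x‖ + |g₁ x| * |h₁ x|))
        + (∫ x, (‖fderiv ℝ g₂ x‖ * ‖fderiv ℝ h₂ x‖ + |g₂ x| * |h₂ x|)))
        ≤ 2*M*Real.sqrt (P * Hh) := by
      refine mul_le_mul_of_nonneg_left ?_ (by linarith)
      linarith [hcr1, hcr2, hsqrt]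
    simp only [hM₂def]
    linarith [hamgm, hmul]
  have hDlow : -((C/2) * P + M₂ * Hh) ≤ ∫ x, (If x - Ig x) := by
    have hmono : (∫ x, -(S x)) ≤ ∫ x, (If x - Ig x) :=
      integral_mono hSint.neg (hIf.sub hIg) hpt
    rw [integral_neg] at hmono
    linarith [hSle]
  -- H¹ norms of f vs g, h
  have hf1eq : H1SqR f₁ = H1SqR (fun x => g₁ x + h₁ x) := by
    refine congrArg H1SqR (funext fun x => ?_)
    simp only [hg₁def]
    ring
  have hf2eq : H1SqR f₂ = H1SqR (fun x => g₂ x + h₂ x) := by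
    refine congrArg H1SqR (funext fun x => ?_)
    simp only [hg₂def]
    ring
  have hf1le : H1SqR f₁ ≤ 2 * H1SqR g₁ + 2 * H1SqR h₁ := by
    rw [hf1eq]; exact cws_H1_le_two hg₁mem hh₁mem
  have hf2le : H1SqR f₂ ≤ 2 * H1SqR g₂ + 2 * H1SqR h₂ := by
    rw [hf2eq]; exact cws_H1_le_two hg₂mem hh₂mem
  -- Scal bounds
  have hsum1 : ∑ j : Unit ⊕ (Fin d ⊕ Unit), (∫ x, f₁ x * cwsW1 Q j x) ^ 2
      = (∫ x, f₁ x * Q x) ^ 2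
        + ((∑ i : Fin d, (∫ x : EuclideanSpace ℝ (Fin d), f₁ x * (x i * Q x)) ^ 2)
          + (∫ x : EuclideanSpace ℝ (Fin d), f₁ x * (‖x‖ ^ 2 * Q x)) ^ 2) := by
    rw [Fintype.sum_sum_type, Fintype.sum_sum_type]
    simp [cwsW1]
  have hsum2 : ∑ j : Fin d ⊕ (Unit ⊕ Unit), (∫ x, f₂ x * cwsW2 Q ρ j x) ^ 2
      = (∑ i : Fin d, (∫ x : EuclideanSpace ℝ (Fin d),
          f₂ x * fderiv ℝ Q x (EuclideanSpace.single i 1)) ^ 2)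
        + ((∫ x : EuclideanSpace ℝ (Fin d), f₂ x * lamOp Q x) ^ 2
          + (∫ x : EuclideanSpace ℝ (Fin d), f₂ x * ρ x) ^ 2) := by
    rw [Fintype.sum_sum_type, Fintype.sum_sum_type]
    simp [cwsW2]
  have hS1nn : (0:ℝ) ≤ ∑ j : Unit ⊕ (Fin d ⊕ Unit), (∫ x, f₁ x * cwsW1 Q j x) ^ 2 :=
    Finset.sum_nonneg fun j _ => sq_nonneg _
  have hS2nn : (0:ℝ) ≤ ∑ j : Fin d ⊕ (Unit ⊕ Unit), (∫ x, f₂ x * cwsW2 Q ρ j x) ^ 2 :=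
    Finset.sum_nonneg fun j _ => sq_nonneg _
  have hScal : ScalQ Q ρ f₁ f₂
      = (∑ j : Unit ⊕ (Fin d ⊕ Unit), (∫ x, f₁ x * cwsW1 Q j x) ^ 2)
        + (∑ j : Fin d ⊕ (Unit ⊕ Unit), (∫ x, f₂ x * cwsW2 Q ρ j x) ^ 2) := by
    rw [hsum1, hsum2, ScalQ]
    ring
  have hScal0 : 0 ≤ ScalQ Q ρ f₁ f₂ := by rw [hScal]; linarith
  have hHscal : Hh ≤ Km * ScalQ Q ρ f₁ f₂ := by
    have e1 : H1SqR h₁ ≤ Km * ∑ j : Unit ⊕ (Fin d ⊕ Unit), (∫ x, f₁ x * cwsW1 Q j x) ^ 2 := by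
      refine le_trans hb₁ (mul_le_mul_of_nonneg_right ?_ hS1nn)
      rw [hKmdef]; exact le_max_left _ _
    have e2 : H1SqR h₂ ≤ Km * ∑ j : Fin d ⊕ (Unit ⊕ Unit), (∫ x, f₂ x * cwsW2 Q ρ j x) ^ 2 := by
      refine le_trans hb₂ (mul_le_mul_of_nonneg_right ?_ hS2nn)
      rw [hKmdef]; exact le_max_right _ _
    rw [hScal, hHhdef, mul_add]
    linarith
  -- final assembly
  have pr1 : (C/4) * (H1SqR f₁ + H1SqR f₂) ≤ (C/2) * P + (C/2) * Hh := by
    have hFle : H1SqR f₁ + H1SqR f₂ ≤ 2*P + 2*Hh := by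
      simp only [hPdef, hHhdef]; linarith
    have := mul_le_mul_of_nonneg_left hFle (by linarith : (0:ℝ) ≤ C/4)
    linarith
  have pr2 : (C/2 + M₂) * Hh ≤ (C/2 + M₂) * (Km * ScalQ Q ρ f₁ f₂) := by
    refine mul_le_mul_of_nonneg_left hHscal ?_
    have := half_pos hC
    linarith
  have hgoal : C/4 * (H1SqR f₁ + H1SqR f₂) - ((C/2 + M₂) * Km) * ScalQ Q ρ f₁ f₂
      ≤ Lquad Q f₁ f₂ := by
    have h1 : Lquad Q f₁ f₂ ≥ C * P - ((C/2) * P + M₂ * Hh) := by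
      rw [hsplit]
      linarith [hcoercg, hDlow]
    linarith [pr1, pr2, h1]
  exact hgoal

end
end

section
/- Suppose g : ℝ^d → ℝ is continuous with |g(y)| ≤ C₀ e^{−δ|y|} for some C₀, δ > 0, and let λ₁, λ₂ > 0 with λ₁/λ₂ ≤ c and λ₂/λ₁ ≤ c for a fixed c ≥ 1, and a₁, a₂ ∈ ℝ^d with |a₁ − a₂| ≥ σ > 0. Then for any m, n ∈ ℕ there exist constants C, δ' > 0 (depending on C₀, δ, c, σ, m, n, d) such that ∫ |x−a₁|^n λ₁^{−d/2} |g((x−a₁)/λ₁)| · |x−a₂|^m λ₂^{−d/2} |g((x−a₂)/λ₂)| dx ≤ C e^{−δ'/λ₁} whenever λ₁ ≤ 1. -/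
open MeasureTheory

noncomputable section

/-- polynomial beaten by exponential: `r^k e^{-βr} ≤ k!/β^k`. -/
lemma poly_exp_bound (β : ℝ) (hβ : 0 < β) (r : ℝ) (hr : 0 ≤ r) (k : ℕ) :
    r ^ k * Real.exp (-(β * r)) ≤ (k.factorial : ℝ) / β ^ k := by
  have h := Real.pow_div_factorial_le_exp (β * r) (mul_nonneg hβ.le hr) k
  -- (β r)^k / k! ≤ exp (β r)
  have hk : (0:ℝ) < (k.factorial : ℝ) := by exact_mod_cast k.factorial_pos
  have hβk : (0:ℝ) < β ^ k := pow_pos hβ k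
  rw [mul_pow, div_le_iff₀ hk] at h
  rw [le_div_iff₀ hβk]
  calc r ^ k * Real.exp (-(β * r)) * β ^ k
      = (β ^ k * r ^ k) * Real.exp (-(β * r)) := by ring
    _ ≤ (Real.exp (β * r) * (k.factorial : ℝ)) * Real.exp (-(β * r)) :=
        mul_le_mul_of_nonneg_right h (Real.exp_pos _).le
    _ = (k.factorial : ℝ) := by rw [mul_comm (Real.exp (β*r)), mul_assoc, ← Real.exp_add]; simp

lemma integrable_exp_neg_norm (d : ℕ) (α : ℝ) (hα : 0 < α) :
    Integrable (fun x : EuclideanSpace ℝ (Fin d) => Real.exp (-(α * ‖x‖))) := by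
  set K : ℝ := ((d+1).factorial : ℝ) / α ^ (d+1) * Real.exp α with hK
  have hnr : (Module.finrank ℝ (EuclideanSpace ℝ (Fin d)) : ℝ) < ((d:ℝ) + 1) := by
    simp [finrank_euclideanSpace]
  have h := (integrable_one_add_norm (E := EuclideanSpace ℝ (Fin d)) (μ := volume) hnr).const_mul K
  refine h.mono' ?_ ?_
  · exact (Real.continuous_exp.comp (continuous_const.mul continuous_norm).neg).aestronglyMeasurable
  · refine Filter.Eventually.of_forall fun x => ?_
    have ht : (0:ℝ) ≤ ‖x‖ := norm_nonneg _
    have h1 : (0:ℝ) < 1 + ‖x‖ := by linarith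
    rw [Real.norm_eq_abs, Real.abs_exp]
    have hpow : ((1:ℝ) + ‖x‖) ^ (-((d:ℝ)+1)) = (((1:ℝ) + ‖x‖) ^ (d+1))⁻¹ := by
      rw [Real.rpow_neg h1.le]
      norm_num [Real.rpow_natCast]
      rw [← Real.rpow_natCast (1 + ‖x‖) (d+1)]
      push_cast
      ring_nf
    rw [hpow, ← div_eq_mul_inv, le_div_iff₀ (by positivity)]
    have hpb := poly_exp_bound α hα (1 + ‖x‖) (by positivity) (d+1)
    have hsplit : Real.exp (-(α * ‖x‖)) = Real.exp (-(α * (1 + ‖x‖))) * Real.exp α := by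
      rw [← Real.exp_add]; ring_nf
    calc Real.exp (-(α * ‖x‖)) * (1 + ‖x‖) ^ (d+1)
        = ((1 + ‖x‖) ^ (d+1) * Real.exp (-(α * (1 + ‖x‖)))) * Real.exp α := by
          rw [hsplit]; ring
      _ ≤ (((d+1).factorial : ℝ) / α ^ (d+1)) * Real.exp α :=
          mul_le_mul_of_nonneg_right hpb (Real.exp_pos _).le
      _ = K := rfl


/-- Key pointwise scalar estimate. -/
lemma key_bound (δ c σ : ℝ) (hδ : 0 < δ) (hc : 1 ≤ c) (hσ : 0 < σ) (m n d : ℕ)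
    (lam₁ lam₂ u v : ℝ) (h1 : 0 < lam₁) (h2 : 0 < lam₂)
    (h21 : lam₂ ≤ c * lam₁) (h12 : lam₁ ≤ c * lam₂)
    (hu : 0 ≤ u) (hv : 0 ≤ v) (huv : σ ≤ u + v) (hl1 : lam₁ ≤ 1) :
    (u ^ n * lam₁ ^ (-(d:ℝ)/2) * Real.exp (-δ * (lam₁⁻¹ * u))) *
      (v ^ m * lam₂ ^ (-(d:ℝ)/2) * Real.exp (-δ * (lam₂⁻¹ * v))) ≤
    (c ^ ((d:ℝ)/2) * ((n.factorial : ℝ) / (δ/4) ^ n) * ((m.factorial : ℝ) / (δ/4/c) ^ m)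
      * ((d.factorial : ℝ) / (3 * (δ*σ/(16*c))) ^ d)) *
      Real.exp (-(δ*σ/(16*c)) * lam₁⁻¹) * Real.exp (-(δ/4 * u)) := by
  have hc0 : (0:ℝ) < c := lt_of_lt_of_le one_pos hc
  set α : ℝ := δ/4 with hαdef
  set δ' : ℝ := δ*σ/(16*c) with hδ'def
  have hα : 0 < α := by positivity
  have hδ' : 0 < δ' := by positivity
  have ht1 : 1 ≤ lam₁⁻¹ := by
    have := inv_anti₀ h1 hl1; simpa using this
  have hinv2 : c⁻¹ ≤ lam₂⁻¹ := by
    have h2c : lam₂ ≤ c := h21.trans (by nlinarith)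
    exact inv_anti₀ h2 h2c
  have hinv2' : c⁻¹ * lam₁⁻¹ ≤ lam₂⁻¹ := by
    have := inv_anti₀ h2 h21
    rwa [mul_inv] at this
  -- exponential splitting
  have Esplit : Real.exp (-δ * (lam₁⁻¹ * u)) * Real.exp (-δ * (lam₂⁻¹ * v)) ≤
      Real.exp (-(α * u)) * Real.exp (-(α/c * v)) *
        Real.exp (-(4*δ' * lam₁⁻¹)) * Real.exp (-(α * u)) := by
    rw [← Real.exp_add, ← Real.exp_add, ← Real.exp_add, ← Real.exp_add]
    apply Real.exp_le_exp.2
    have p1 : α * u ≤ α * (lam₁⁻¹ * u) := by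
      have : u ≤ lam₁⁻¹ * u := le_mul_of_one_le_left hu ht1
      nlinarith
    have p2 : α/c * v ≤ α * (lam₂⁻¹ * v) := by
      have : c⁻¹ * v ≤ lam₂⁻¹ * v := mul_le_mul_of_nonneg_right hinv2 hv
      have h' : α * (c⁻¹ * v) ≤ α * (lam₂⁻¹ * v) := by nlinarith
      calc α/c * v = α * (c⁻¹ * v) := by field_simp
        _ ≤ α * (lam₂⁻¹ * v) := h'
    have q1 : α/c * (lam₁⁻¹ * u) ≤ α * (lam₁⁻¹ * u) := by
      have h0 : 0 ≤ lam₁⁻¹ * u := by positivity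
      have : α/c ≤ α := by
        rw [div_le_iff₀ hc0]; nlinarith
      nlinarith
    have q2 : α/c * (lam₁⁻¹ * v) ≤ α * (lam₂⁻¹ * v) := by
      have h0 : 0 ≤ α * v := by positivity
      have := mul_le_mul_of_nonneg_left hinv2' h0
      calc α/c * (lam₁⁻¹ * v) = (α * v) * (c⁻¹ * lam₁⁻¹) := by field_simp
        _ ≤ (α * v) * lam₂⁻¹ := this
        _ = α * (lam₂⁻¹ * v) := by ring
    have q3 : α/c * (lam₁⁻¹ * σ) ≤ α/c * (lam₁⁻¹ * u) + α/c * (lam₁⁻¹ * v) := by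
      have h0 : 0 ≤ α/c * lam₁⁻¹ := by positivity
      nlinarith
    have p3 : 4*δ' * lam₁⁻¹ ≤ α * (lam₁⁻¹ * u) + α * (lam₂⁻¹ * v) := by
      have he : 4*δ' * lam₁⁻¹ = α/c * (lam₁⁻¹ * σ) := by
        rw [hδ'def, hαdef]; field_simp; ring
      rw [he]; linarith
    have hδα : δ = 4*α := by rw [hαdef]; ring
    have hX1 : 0 ≤ α * (lam₁⁻¹ * u) := by positivity
    have hX2 : 0 ≤ α * (lam₂⁻¹ * v) := by positivity
    rw [hδα]
    linarith
  -- prefactor bound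
  have PB : lam₁ ^ (-(d:ℝ)/2) * lam₂ ^ (-(d:ℝ)/2) ≤ c ^ ((d:ℝ)/2) * lam₁⁻¹ ^ d := by
    have hl2 : lam₁ / c ≤ lam₂ := by rw [div_le_iff₀ hc0]; linarith
    have e_nonpos : -(d:ℝ)/2 ≤ 0 := by
      have : (0:ℝ) ≤ (d:ℝ)/2 := by positivity
      linarith
    have h2' : lam₂ ^ (-(d:ℝ)/2) ≤ (lam₁/c) ^ (-(d:ℝ)/2) :=
      Real.rpow_le_rpow_of_nonpos (by positivity) hl2 e_nonpos
    have heq : (lam₁/c) ^ (-(d:ℝ)/2) = c ^ ((d:ℝ)/2) * lam₁ ^ (-(d:ℝ)/2) := by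
      rw [Real.div_rpow h1.le hc0.le, neg_div, Real.rpow_neg hc0.le, div_eq_mul_inv, inv_inv,
        mul_comm]
    have step : lam₁ ^ (-(d:ℝ)/2) * lam₂ ^ (-(d:ℝ)/2) ≤
        c ^ ((d:ℝ)/2) * (lam₁ ^ (-(d:ℝ)/2) * lam₁ ^ (-(d:ℝ)/2)) := by
      calc lam₁ ^ (-(d:ℝ)/2) * lam₂ ^ (-(d:ℝ)/2)
          ≤ lam₁ ^ (-(d:ℝ)/2) * ((lam₁/c) ^ (-(d:ℝ)/2)) :=
            mul_le_mul_of_nonneg_left h2' (Real.rpow_nonneg h1.le _)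
        _ = c ^ ((d:ℝ)/2) * (lam₁ ^ (-(d:ℝ)/2) * lam₁ ^ (-(d:ℝ)/2)) := by rw [heq]; ring
    have hsq : lam₁ ^ (-(d:ℝ)/2) * lam₁ ^ (-(d:ℝ)/2) = lam₁⁻¹ ^ d := by
      rw [← Real.rpow_add h1]
      have : -(d:ℝ)/2 + -(d:ℝ)/2 = -(d:ℝ) := by ring
      rw [this, Real.rpow_neg h1.le, Real.rpow_natCast, inv_pow]
    rw [hsq] at step
    exact step
  -- individual factor bounds
  have B1 : u ^ n * Real.exp (-(α * u)) ≤ (n.factorial : ℝ) / α ^ n :=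
    poly_exp_bound α hα u hu n
  have B2 : v ^ m * Real.exp (-(α/c * v)) ≤ (m.factorial : ℝ) / (α/c) ^ m :=
    poly_exp_bound (α/c) (by positivity) v hv m
  have B3 : lam₁⁻¹ ^ d * Real.exp (-(4*δ' * lam₁⁻¹)) ≤
      ((d.factorial : ℝ) / (3*δ') ^ d) * Real.exp (-δ' * lam₁⁻¹) := by
    have hsplit : Real.exp (-(4*δ' * lam₁⁻¹)) =
        Real.exp (-(3*δ' * lam₁⁻¹)) * Real.exp (-δ' * lam₁⁻¹) := by
      rw [← Real.exp_add]; ring_nf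
    rw [hsplit, ← mul_assoc]
    apply mul_le_mul_of_nonneg_right _ (Real.exp_pos _).le
    exact poly_exp_bound (3*δ') (by positivity) lam₁⁻¹ (by positivity) d
  -- assemble
  calc (u ^ n * lam₁ ^ (-(d:ℝ)/2) * Real.exp (-δ * (lam₁⁻¹ * u))) *
      (v ^ m * lam₂ ^ (-(d:ℝ)/2) * Real.exp (-δ * (lam₂⁻¹ * v)))
      = (lam₁ ^ (-(d:ℝ)/2) * lam₂ ^ (-(d:ℝ)/2)) * (u ^ n * v ^ m *
          (Real.exp (-δ * (lam₁⁻¹ * u)) * Real.exp (-δ * (lam₂⁻¹ * v)))) := by ring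
    _ ≤ (lam₁ ^ (-(d:ℝ)/2) * lam₂ ^ (-(d:ℝ)/2)) * (u ^ n * v ^ m *
          (Real.exp (-(α * u)) * Real.exp (-(α/c * v)) *
            Real.exp (-(4*δ' * lam₁⁻¹)) * Real.exp (-(α * u)))) := by
        apply mul_le_mul_of_nonneg_left _ (by positivity)
        exact mul_le_mul_of_nonneg_left Esplit (by positivity)
    _ ≤ (c ^ ((d:ℝ)/2) * lam₁⁻¹ ^ d) * (u ^ n * v ^ m *
          (Real.exp (-(α * u)) * Real.exp (-(α/c * v)) *
            Real.exp (-(4*δ' * lam₁⁻¹)) * Real.exp (-(α * u)))) := by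
        apply mul_le_mul_of_nonneg_right PB (by positivity)
    _ = c ^ ((d:ℝ)/2) * ((u ^ n * Real.exp (-(α * u))) * ((v ^ m * Real.exp (-(α/c * v))) *
          ((lam₁⁻¹ ^ d * Real.exp (-(4*δ' * lam₁⁻¹))) * Real.exp (-(α * u))))) := by ring
    _ ≤ c ^ ((d:ℝ)/2) * (((n.factorial : ℝ) / α ^ n) * (((m.factorial : ℝ) / (α/c) ^ m) *
          ((((d.factorial : ℝ) / (3*δ') ^ d) * Real.exp (-δ' * lam₁⁻¹)) *
            Real.exp (-(α * u))))) := by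
        gcongr
    _ = (c ^ ((d:ℝ)/2) * ((n.factorial : ℝ) / (δ/4) ^ n) * ((m.factorial : ℝ) / (δ/4/c) ^ m)
          * ((d.factorial : ℝ) / (3 * (δ*σ/(16*c))) ^ d)) *
          Real.exp (-(δ*σ/(16*c)) * lam₁⁻¹) * Real.exp (-(δ/4 * u)) := by
        rw [hαdef, hδ'def]; ring

/-- **Interaction estimate for two separated bubbles**: if `g` is continuous with
`|g(y)| ≤ C₀ e^{−δ|y|}`, the scales `λ₁ ≍ λ₂ ≤ 1` are comparable (ratio at most `c`) and
the centers satisfy `|a₁ − a₂| ≥ σ`, then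
`∫ |x−a₁|^n λ₁^{−d/2} |g((x−a₁)/λ₁)| · |x−a₂|^m λ₂^{−d/2} |g((x−a₂)/λ₂)| dx
  ≤ C e^{−δ'/λ₁}`. -/
theorem bubble_interaction_estimate (d : ℕ) (hd : 1 ≤ d)
    (g : EuclideanSpace ℝ (Fin d) → ℝ) (hgc : Continuous g)
    (C₀ δ : ℝ) (hC₀ : 0 < C₀) (hδ : 0 < δ)
    (hg : ∀ y, |g y| ≤ C₀ * Real.exp (-δ * ‖y‖))
    (c : ℝ) (hc : 1 ≤ c) (σ : ℝ) (hσ : 0 < σ) (m n : ℕ) :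
    ∃ C δ' : ℝ, 0 < C ∧ 0 < δ' ∧
      ∀ (lam₁ lam₂ : ℝ) (a₁ a₂ : EuclideanSpace ℝ (Fin d)),
        0 < lam₁ → 0 < lam₂ → lam₁ / lam₂ ≤ c → lam₂ / lam₁ ≤ c →
        σ ≤ ‖a₁ - a₂‖ → lam₁ ≤ 1 →
        (∫ x : EuclideanSpace ℝ (Fin d),
          (‖x - a₁‖ ^ n * lam₁ ^ (-(d : ℝ) / 2) * |g (lam₁⁻¹ • (x - a₁))|) *
            (‖x - a₂‖ ^ m * lam₂ ^ (-(d : ℝ) / 2) * |g (lam₂⁻¹ • (x - a₂))|)) ≤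
          C * Real.exp (-δ' / lam₁) := by
  have hc0 : (0:ℝ) < c := lt_of_lt_of_le one_pos hc
  have hα : (0:ℝ) < δ/4 := by positivity
  have hδ'pos : (0:ℝ) < δ*σ/(16*c) := by positivity
  have hBint := integrable_exp_neg_norm d (δ/4) hα
  have hB : (0:ℝ) ≤ ∫ y : EuclideanSpace ℝ (Fin d), Real.exp (-(δ/4 * ‖y‖)) :=
    integral_nonneg fun y => (Real.exp_pos _).le
  have hK : (0:ℝ) ≤ c ^ ((d:ℝ)/2) * ((n.factorial : ℝ) / (δ/4) ^ n)
      * ((m.factorial : ℝ) / (δ/4/c) ^ m)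
      * ((d.factorial : ℝ) / (3 * (δ*σ/(16*c))) ^ d) := by positivity
  refine ⟨C₀^2 * (c ^ ((d:ℝ)/2) * ((n.factorial : ℝ) / (δ/4) ^ n)
      * ((m.factorial : ℝ) / (δ/4/c) ^ m)
      * ((d.factorial : ℝ) / (3 * (δ*σ/(16*c))) ^ d))
      * (∫ y : EuclideanSpace ℝ (Fin d), Real.exp (-(δ/4 * ‖y‖))) + 1,
    δ*σ/(16*c), by positivity, hδ'pos, ?_⟩
  intro lam₁ lam₂ a₁ a₂ h1 h2 h12r h21r hsep hl1
  have h12 : lam₁ ≤ c * lam₂ := by rw [div_le_iff₀ h2] at h12r; linarith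
  have h21 : lam₂ ≤ c * lam₁ := by rw [div_le_iff₀ h1] at h21r; linarith
  set K : ℝ := c ^ ((d:ℝ)/2) * ((n.factorial : ℝ) / (δ/4) ^ n)
      * ((m.factorial : ℝ) / (δ/4/c) ^ m)
      * ((d.factorial : ℝ) / (3 * (δ*σ/(16*c))) ^ d) with hKdef
  have hGint : Integrable (fun x : EuclideanSpace ℝ (Fin d) =>
      (C₀^2 * K * Real.exp (-(δ*σ/(16*c)) * lam₁⁻¹)) * Real.exp (-(δ/4 * ‖x - a₁‖))) :=
    (hBint.comp_sub_right a₁).const_mul _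
  have hmono : ∀ x : EuclideanSpace ℝ (Fin d),
      (‖x - a₁‖ ^ n * lam₁ ^ (-(d : ℝ) / 2) * |g (lam₁⁻¹ • (x - a₁))|) *
        (‖x - a₂‖ ^ m * lam₂ ^ (-(d : ℝ) / 2) * |g (lam₂⁻¹ • (x - a₂))|) ≤
      (C₀^2 * K * Real.exp (-(δ*σ/(16*c)) * lam₁⁻¹)) * Real.exp (-(δ/4 * ‖x - a₁‖)) := by
    intro x
    have hu : (0:ℝ) ≤ ‖x - a₁‖ := norm_nonneg _
    have hv : (0:ℝ) ≤ ‖x - a₂‖ := norm_nonneg _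
    have huv : σ ≤ ‖x - a₁‖ + ‖x - a₂‖ := by
      have htri : ‖a₁ - a₂‖ ≤ ‖a₁ - x‖ + ‖x - a₂‖ := norm_sub_le_norm_sub_add_norm_sub _ _ _
      rw [norm_sub_rev a₁ x] at htri
      linarith
    have hg1 : |g (lam₁⁻¹ • (x - a₁))| ≤ C₀ * Real.exp (-δ * (lam₁⁻¹ * ‖x - a₁‖)) := by
      have h := hg (lam₁⁻¹ • (x - a₁))
      rwa [norm_smul, Real.norm_eq_abs, abs_of_pos (inv_pos.2 h1)] at h
    have hg2 : |g (lam₂⁻¹ • (x - a₂))| ≤ C₀ * Real.exp (-δ * (lam₂⁻¹ * ‖x - a₂‖)) := by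
      have h := hg (lam₂⁻¹ • (x - a₂))
      rwa [norm_smul, Real.norm_eq_abs, abs_of_pos (inv_pos.2 h2)] at h
    have key := key_bound δ c σ hδ hc hσ m n d lam₁ lam₂ ‖x - a₁‖ ‖x - a₂‖
      h1 h2 h21 h12 hu hv huv hl1
    calc (‖x - a₁‖ ^ n * lam₁ ^ (-(d : ℝ) / 2) * |g (lam₁⁻¹ • (x - a₁))|) *
        (‖x - a₂‖ ^ m * lam₂ ^ (-(d : ℝ) / 2) * |g (lam₂⁻¹ • (x - a₂))|)
        ≤ (‖x - a₁‖ ^ n * lam₁ ^ (-(d : ℝ) / 2) * (C₀ * Real.exp (-δ * (lam₁⁻¹ * ‖x - a₁‖)))) *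
          (‖x - a₂‖ ^ m * lam₂ ^ (-(d : ℝ) / 2) * (C₀ * Real.exp (-δ * (lam₂⁻¹ * ‖x - a₂‖)))) := by
          apply mul_le_mul
          · exact mul_le_mul_of_nonneg_left hg1 (by positivity)
          · exact mul_le_mul_of_nonneg_left hg2 (by positivity)
          · positivity
          · positivity
      _ = C₀^2 * ((‖x - a₁‖ ^ n * lam₁ ^ (-(d:ℝ)/2) * Real.exp (-δ * (lam₁⁻¹ * ‖x - a₁‖))) *
          (‖x - a₂‖ ^ m * lam₂ ^ (-(d:ℝ)/2) * Real.exp (-δ * (lam₂⁻¹ * ‖x - a₂‖)))) := by ring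
      _ ≤ C₀^2 * (K * Real.exp (-(δ*σ/(16*c)) * lam₁⁻¹) * Real.exp (-(δ/4 * ‖x - a₁‖))) := by
          apply mul_le_mul_of_nonneg_left _ (by positivity)
          rw [hKdef]
          exact key
      _ = (C₀^2 * K * Real.exp (-(δ*σ/(16*c)) * lam₁⁻¹)) * Real.exp (-(δ/4 * ‖x - a₁‖)) := by
          ring
  have hint : (∫ x : EuclideanSpace ℝ (Fin d),
      (‖x - a₁‖ ^ n * lam₁ ^ (-(d : ℝ) / 2) * |g (lam₁⁻¹ • (x - a₁))|) *
        (‖x - a₂‖ ^ m * lam₂ ^ (-(d : ℝ) / 2) * |g (lam₂⁻¹ • (x - a₂))|)) ≤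
      ∫ x : EuclideanSpace ℝ (Fin d),
        (C₀^2 * K * Real.exp (-(δ*σ/(16*c)) * lam₁⁻¹)) * Real.exp (-(δ/4 * ‖x - a₁‖)) := by
    apply integral_mono_of_nonneg
    · exact Filter.Eventually.of_forall fun x => by positivity
    · exact hGint
    · exact Filter.Eventually.of_forall hmono
  have heval : (∫ x : EuclideanSpace ℝ (Fin d),
      (C₀^2 * K * Real.exp (-(δ*σ/(16*c)) * lam₁⁻¹)) * Real.exp (-(δ/4 * ‖x - a₁‖)))
      = (C₀^2 * K * Real.exp (-(δ*σ/(16*c)) * lam₁⁻¹)) *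
        ∫ y : EuclideanSpace ℝ (Fin d), Real.exp (-(δ/4 * ‖y‖)) := by
    rw [integral_const_mul]
    congr 1
    exact integral_sub_right_eq_self (fun y => Real.exp (-(δ/4 * ‖y‖))) a₁
  refine hint.trans ?_
  rw [heval]
  have hE : Real.exp (-(δ*σ/(16*c)) / lam₁) = Real.exp (-(δ*σ/(16*c)) * lam₁⁻¹) := by
    rw [div_eq_mul_inv]
  rw [hE]
  have hEpos : (0:ℝ) < Real.exp (-(δ*σ/(16*c)) * lam₁⁻¹) := Real.exp_pos _
  nlinarith [mul_nonneg (mul_nonneg (sq_nonneg C₀) hK) hB, hEpos]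

end
end
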